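/- Every well-graded family with additionality 2 has VC-dimension exactly 2. -/

import Mathlib

/-!
Splitting a well-graded family along an essential coordinate `z` gives two well-graded halves
(half-spaces are geodesically convex), and an edge of the one-inclusion graph crossing `z` shows
that every other essential coordinate stays essential in one of the halves. Induction along such
splits gives `#(ess F) + 2 ^ #S ≤ #F + #S` for every shattered `S`, so additionality two rules out
shattered triples. Conversely, by Pajor's lemma `F` shatters at least `#F = #(ess F) + 2` sets,
while `∅` and the singletons of essential elements account for only `#(ess F) + 1` of them.
-/

/-- The one-inclusion graph of a set system. -/
def oneInclusion {α : Type*} [DecidableEq α] (F : Finset (Finset α)) :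
    SimpleGraph {A : Finset α // A ∈ F} where
  Adj A B := (symmDiff A.1 B.1).card = 1
  symm := by
    constructor
    intro A B h
    rwa [symmDiff_comm] at h
  loopless := by
    constructor
    intro A h
    simp [symmDiff_self] at h

/-- A set system is well-graded if the Hamming distance between any two members
equals their distance in the one-inclusion graph. -/
def WellGraded {α : Type*} [DecidableEq α] (F : Finset (Finset α)) : Prop :=
  ∀ A B : {A : Finset α // A ∈ F},
    (oneInclusion F).dist A B = (symmDiff A.1 B.1).card

/-- The set of essential elements of the domain. -/
def essSet {α : Type*} [DecidableEq α] [Fintype α] (F : Finset (Finset α)) :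
    Finset α :=
  Finset.univ.filter (fun x => (∃ A ∈ F, x ∈ A) ∧ ∃ B ∈ F, x ∉ B)

/-- The VC-dimension of a finite set system. -/
def vcDim {α : Type*} [DecidableEq α] (F : Finset (Finset α)) : ℕ :=
  F.shatterer.sup Finset.card

section

open Finset
open scoped symmDiff

variable {α : Type*} [DecidableEq α] {F : Finset (Finset α)} {x z : α}

lemma card_symmDiff_le_add (A B C : Finset α) : #(A ∆ C) ≤ #(A ∆ B) + #(B ∆ C) :=
  (card_le_card (symmDiff_triangle A B C)).trans (card_union_le _ _)

lemma card_symmDiff_lt_add {A B C : Finset α} (hAC : z ∈ A ∆ C) (hCB : z ∈ C ∆ B) :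
    #(A ∆ B) < #(A ∆ C) + #(C ∆ B) := by
  have hz : 0 < #(A ∆ C ∩ C ∆ B) := card_pos.2 ⟨z, mem_inter.2 ⟨hAC, hCB⟩⟩
  calc #(A ∆ B) ≤ #(A ∆ C ∪ C ∆ B) := card_le_card (symmDiff_triangle A C B)
    _ < #(A ∆ C ∪ C ∆ B) + #(A ∆ C ∩ C ∆ B) := by omega
    _ = #(A ∆ C) + #(C ∆ B) := card_union_add_card_inter _ _

lemma card_symmDiff_le_length {A B : {A // A ∈ F}} (w : (oneInclusion F).Walk A B) :
    #(A.1 ∆ B.1) ≤ w.length := by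
  induction w with
  | nil => simp
  | @cons A C B hAC _ ih =>
    have hstep : #(A.1 ∆ C.1) = 1 := hAC
    have := card_symmDiff_le_add A.1 C.1 B.1
    rw [SimpleGraph.Walk.length_cons]
    omega

theorem wellGraded_iff_exists_step :
    WellGraded F ↔ ∀ A ∈ F, ∀ B ∈ F, A ≠ B →
      ∃ C ∈ F, #(A ∆ C) = 1 ∧ #(C ∆ B) + 1 = #(A ∆ B) := by
  constructor
  · intro hF A hA B hB hAB
    have hd : _ = #(A ∆ B) := hF ⟨A, hA⟩ ⟨B, hB⟩
    have hpos : 0 < #(A ∆ B) := card_pos.2 (symmDiff_nonempty.2 hAB)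
    have hr : (oneInclusion F).Reachable ⟨A, hA⟩ ⟨B, hB⟩ := .of_dist_ne_zero (by omega)
    obtain ⟨w, hw⟩ := hr.exists_walk_length_eq_dist
    cases w with
    | nil => exact absurd rfl hAB
    | @cons _ C _ hAC p =>
      have hstep : #(A ∆ C.1) = 1 := hAC
      have hCB : #(C.1 ∆ B) ≤ p.length := (hF C ⟨B, hB⟩).symm.trans_le (SimpleGraph.dist_le p)
      have := card_symmDiff_le_add A C.1 B
      rw [SimpleGraph.Walk.length_cons] at hw
      exact ⟨C.1, C.2, hstep, by omega⟩
  · intro hstep A B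
    suffices ∃ w : (oneInclusion F).Walk A B, w.length = #(A.1 ∆ B.1) by
      obtain ⟨w, hw⟩ := this
      obtain ⟨v, hv⟩ := w.reachable.exists_walk_length_eq_dist
      have := card_symmDiff_le_length v
      have := SimpleGraph.dist_le w
      omega
    induction hn : #(A.1 ∆ B.1) using Nat.strong_induction_on generalizing A with
    | _ n ih =>
      by_cases hAB : A = B
      · subst hAB
        exact ⟨.nil, by simpa using hn⟩
      obtain ⟨C, hC, hAC, hCB⟩ := hstep A.1 A.2 B.1 B.2 (Subtype.coe_ne_coe.2 hAB)
      obtain ⟨w, hw⟩ := ih #(C ∆ B.1) (by omega) ⟨C, hC⟩ rfl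
      exact ⟨.cons (show (oneInclusion F).Adj A ⟨C, hC⟩ from hAC) w, by simp [hw]; omega⟩

theorem WellGraded.filter (hF : WellGraded F) {p : Finset α → Prop} [DecidablePred p]
    (hp : ∀ A B C, p A → p B → #(A ∆ C) + #(C ∆ B) = #(A ∆ B) → p C) :
    WellGraded (F.filter p) := by
  rw [wellGraded_iff_exists_step] at hF ⊢
  intro A hA B hB hAB
  rw [mem_filter] at hA hB
  obtain ⟨C, hC, hAC, hCB⟩ := hF A hA.1 B hB.1 hAB
  exact ⟨C, mem_filter.2 ⟨hC, hp A B C hA.2 hB.2 (by omega)⟩, hAC, hCB⟩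

theorem WellGraded.filter_mem (hF : WellGraded F) (z : α) : WellGraded (F.filter (z ∈ ·)) :=
  hF.filter fun A B C hA hB hgeod ↦ by
    by_contra hC
    have := card_symmDiff_lt_add (z := z) (B := B) (mem_symmDiff.2 (.inl ⟨hA, hC⟩))
      (mem_symmDiff.2 (.inr ⟨hB, hC⟩))
    omega

theorem WellGraded.filter_notMem (hF : WellGraded F) (z : α) : WellGraded (F.filter (z ∉ ·)) :=
  hF.filter fun A B C hA hB hgeod ↦ by
    intro hC
    have := card_symmDiff_lt_add (z := z) (B := B) (mem_symmDiff.2 (.inr ⟨hC, hA⟩))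
      (mem_symmDiff.2 (.inl ⟨hC, hB⟩))
    omega

theorem WellGraded.exists_insert_mem (hF : WellGraded F) {A B : Finset α}
    (hA : A ∈ F) (hB : B ∈ F) (hzA : z ∉ A) (hzB : z ∈ B) :
    ∃ P ∈ F, z ∉ P ∧ insert z P ∈ F := by
  rw [wellGraded_iff_exists_step] at hF
  induction hn : #(A ∆ B) using Nat.strong_induction_on generalizing A with
  | _ n ih =>
    obtain ⟨C, hC, hAC, hCB⟩ := hF A hA B hB (by rintro rfl; exact hzA hzB)
    by_cases hzC : z ∈ C
    · obtain ⟨x, hx⟩ := card_eq_one.1 hAC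
      have hzx : z = x := by
        simpa [hx] using (mem_symmDiff.2 (.inr ⟨hzC, hzA⟩) : z ∈ A ∆ C)
      have : C = insert z A := by
        rw [← symmDiff_symmDiff_cancel_left A C, hx, ← hzx]
        ext y; by_cases hy : y = z <;> simp [mem_symmDiff, hy, hzA]
      exact ⟨A, hA, hzA, this ▸ hC⟩
    · exact ih _ (by omega) hC hzC rfl

lemma Finset.Shatters.filter_mem {S : Finset α} (hS : F.Shatters (insert z S)) (hzS : z ∉ S) :
    (F.filter (z ∈ ·)).Shatters S := by
  intro T hT
  have hzT : z ∉ T := fun h ↦ hzS (hT h)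
  obtain ⟨A, hA, hSA⟩ := hS (insert_subset_insert z hT)
  have hzA : z ∈ A := (mem_inter.1 (hSA ▸ mem_insert_self z T)).2
  refine ⟨A, mem_filter.2 ⟨hA, hzA⟩, ?_⟩
  rw [insert_inter_of_mem hzA] at hSA
  calc S ∩ A = (insert z (S ∩ A)).erase z := (erase_insert fun h ↦ hzS (mem_inter.1 h).1).symm
    _ = T := by rw [hSA, erase_insert hzT]

lemma Finset.Shatters.filter_notMem {S : Finset α} (hS : F.Shatters (insert z S))
    (hzS : z ∉ S) : (F.filter (z ∉ ·)).Shatters S := by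
  intro T hT
  obtain ⟨A, hA, hSA⟩ := hS (hT.trans (subset_insert z S))
  have hzA : z ∉ A := fun hzA ↦ hzS (hT (hSA ▸ mem_inter.2 ⟨mem_insert_self z S, hzA⟩))
  exact ⟨A, mem_filter.2 ⟨hA, hzA⟩, by rwa [insert_inter_of_notMem hzA] at hSA⟩

variable [Fintype α]

lemma mem_essSet : x ∈ essSet F ↔ (∃ A ∈ F, x ∈ A) ∧ ∃ B ∈ F, x ∉ B := by
  simp [essSet]

lemma notMem_essSet : x ∉ essSet F ↔ ∀ A ∈ F, ∀ B ∈ F, (x ∈ A ↔ x ∈ B) := by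
  rw [mem_essSet]
  constructor
  · intro h A hA B hB
    constructor
    · exact fun hxA ↦ by_contra fun hxB ↦ h ⟨⟨A, hA, hxA⟩, B, hB, hxB⟩
    · exact fun hxB ↦ by_contra fun hxA ↦ h ⟨⟨B, hB, hxB⟩, A, hA, hxA⟩
  · rintro h ⟨⟨A, hA, hxA⟩, B, hB, hxB⟩
    exact hxB ((h A hA B hB).1 hxA)

lemma Finset.Shatters.subset_essSet {S : Finset α} (hS : F.Shatters S) : S ⊆ essSet F := by
  intro x hx
  obtain ⟨A, hA, hSA⟩ := hS.exists_inter_eq_singleton hx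
  obtain ⟨B, hB, hSB⟩ := hS (empty_subset S)
  refine mem_essSet.2 ⟨⟨A, hA, (mem_inter.1 (hSA ▸ mem_singleton_self x)).2⟩, B, hB, fun hxB ↦ ?_⟩
  have : x ∈ S ∩ B := mem_inter.2 ⟨hx, hxB⟩
  simp [hSB] at this

lemma WellGraded.essSet_subset (hF : WellGraded F) (hz : z ∈ essSet F) :
    essSet F ⊆ insert z (essSet (F.filter (z ∈ ·)) ∪ essSet (F.filter (z ∉ ·))) := by
  intro x hx
  by_contra h
  simp only [mem_insert, mem_union, not_or] at h
  obtain ⟨hxz, hx₁, hx₀⟩ := h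
  rw [notMem_essSet] at hx₁ hx₀
  obtain ⟨⟨A, hA, hzA⟩, B, hB, hzB⟩ := mem_essSet.1 hz
  obtain ⟨P, hP, hzP, hQ⟩ := hF.exists_insert_mem hB hA hzB hzA
  have hside : ∀ C ∈ F, (x ∈ C ↔ x ∈ P) := by
    intro C hC
    by_cases hzC : z ∈ C
    · simpa [hxz] using hx₁ C (mem_filter.2 ⟨hC, hzC⟩) _ (mem_filter.2 ⟨hQ, mem_insert_self z P⟩)
    · exact hx₀ C (mem_filter.2 ⟨hC, hzC⟩) P (mem_filter.2 ⟨hP, hzP⟩)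
  obtain ⟨⟨C, hC, hxC⟩, D, hD, hxD⟩ := mem_essSet.1 hx
  exact hxD ((hside D hD).2 ((hside C hC).1 hxC))

lemma WellGraded.card_essSet_add_card_inter_le (hF : WellGraded F) (hz : z ∈ essSet F) :
    #(essSet F) + #(essSet (F.filter (z ∈ ·)) ∩ essSet (F.filter (z ∉ ·))) ≤
      #(essSet (F.filter (z ∈ ·))) + #(essSet (F.filter (z ∉ ·))) + 1 := by
  have := card_le_card (hF.essSet_subset hz)
  have := card_insert_le z (essSet (F.filter (z ∈ ·)) ∪ essSet (F.filter (z ∉ ·)))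
  have := card_union_add_card_inter (essSet (F.filter (z ∈ ·))) (essSet (F.filter (z ∉ ·)))
  omega

theorem WellGraded.card_essSet_lt_card (hF : WellGraded F) (hne : F.Nonempty) :
    #(essSet F) < #F := by
  induction F using Finset.strongInduction with
  | H F ih =>
    obtain hE | ⟨z, hz⟩ := (essSet F).eq_empty_or_nonempty
    · simpa [hE] using hne.card_pos
    obtain ⟨⟨A, hA, hzA⟩, B, hB, hzB⟩ := mem_essSet.1 hz
    have h₁ := ih _ (filter_ssubset.2 ⟨B, hB, hzB⟩) (hF.filter_mem z)
      ⟨A, mem_filter.2 ⟨hA, hzA⟩⟩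
    have h₀ := ih _ (filter_ssubset.2 ⟨A, hA, not_not.2 hzA⟩) (hF.filter_notMem z)
      ⟨B, mem_filter.2 ⟨hB, hzB⟩⟩
    have := hF.card_essSet_add_card_inter_le hz
    have := card_filter_add_card_filter_not (s := F) (z ∈ ·)
    omega

theorem WellGraded.card_essSet_add_two_pow_le (hF : WellGraded F) {S : Finset α}
    (hS : F.Shatters S) : #(essSet F) + 2 ^ #S ≤ #F + #S := by
  induction S using Finset.induction_on generalizing F with
  | empty => simpa using hF.card_essSet_lt_card (shatters_empty.1 hS)
  | @insert z S hzS ih =>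
    have h₁ := ih (hF.filter_mem z) (hS.filter_mem hzS)
    have h₀ := ih (hF.filter_notMem z) (hS.filter_notMem hzS)
    have hS₁₀ : #S ≤ #(essSet (F.filter (z ∈ ·)) ∩ essSet (F.filter (z ∉ ·))) :=
      card_le_card (subset_inter (hS.filter_mem hzS).subset_essSet
        (hS.filter_notMem hzS).subset_essSet)
    have := hF.card_essSet_add_card_inter_le (hS.subset_essSet (mem_insert_self z S))
    have := card_filter_add_card_filter_not (s := F) (z ∈ ·)
    rw [card_insert_of_notMem hzS, pow_succ]
    omega

lemma card_le_card_essSet_add_one_of_vcDim_le_one (h : F.vcDim ≤ 1) :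
    #F ≤ #(essSet F) + 1 := by
  have hsub : F.shatterer ⊆ insert ∅ ((essSet F).image singleton) := by
    intro S hS
    rw [mem_shatterer] at hS
    obtain h₀ | h₁ := Nat.le_one_iff_eq_zero_or_eq_one.1 (hS.card_le_vcDim.trans h)
    · rw [card_eq_zero.1 h₀]
      exact mem_insert_self _ _
    · obtain ⟨x, rfl⟩ := card_eq_one.1 h₁
      exact mem_insert_of_mem (mem_image_of_mem _ (hS.subset_essSet (mem_singleton_self x)))
  calc #F ≤ #F.shatterer := card_le_card_shatterer F
    _ ≤ #(insert ∅ ((essSet F).image singleton)) := card_le_card hsub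
    _ ≤ #(essSet F) + 1 := (card_insert_le _ _).trans (by gcongr; exact card_image_le)

end

/-- Every well-graded family with additionality `2` has VC-dimension exactly
`2`. -/
theorem vcDim_eq_two_of_additionality_two {α : Type*} [DecidableEq α]
    [Fintype α] (F : Finset (Finset α)) (hWG : WellGraded F)
    (hadd : F.card = (essSet F).card + 2) : vcDim F = 2 := by
  change F.vcDim = 2
  refine le_antisymm (Finset.sup_le fun S hS ↦ ?_) ?_
  · by_contra! h
    obtain ⟨T, hTS, hT⟩ := Finset.exists_subset_card_eq (show 3 ≤ S.card by omega)
    have := hWG.card_essSet_add_two_pow_le ((Finset.mem_shatterer.1 hS).mono_right hTS)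
    rw [hT] at this
    omega
  · by_contra! h
    have := card_le_card_essSet_add_one_of_vcDim_le_one (F := F) (by omega)
    omega
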